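/- Let (R,B) be a ℤ-based rng and B' ⊆ B a closed subset. Then B' is invariant under the involution: ~b ∈ B' for every b ∈ B', and consequently the ℤ-span of B' is ~-invariant. -/

import Mathlib

/-! Associativity applied to the trace form `τ x = ∑ m, conj (e m) * x m` gives Frobenius
reciprocity `N (σ c) a d = N c d a`: the matrix of multiplication by `b (σ i)` is the transpose
of that of `b i`. These matrices commute since the ring is commutative, so both are normal
integer matrices. For `i ∈ B'`, closedness makes multiplication by `b i` preserve the span of
`B'`, and a normal real matrix preserving a coordinate subspace also preserves its complement:
the two off-diagonal blocks have the same sum of squares. So if `σ i ∉ B'`, the product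
`b (σ i) * b i` lies in both spans, hence vanishes, contradicting `τ (b (σ i) * b i) = 1`. -/

open Matrix

theorem Matrix.apply_eq_zero_of_mul_transpose_comm_of_block {ι R : Type*} [Fintype ι]
    [CommRing R] [LinearOrder R] [IsStrictOrderedRing R] (M : Matrix ι ι R)
    (hM : M * Mᵀ = Mᵀ * M) (s : Set ι) (hs : ∀ m ∈ s, ∀ k ∉ s, M m k = 0)
    {m k : ι} (hm : m ∉ s) (hk : k ∈ s) : M m k = 0 := by
  classical
  set t := Finset.univ.filter (· ∈ s)
  have ht : ∀ p, p ∈ t ↔ p ∈ s := by simp [t]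
  let mass (P Q : Finset ι) : R := ∑ p ∈ P, ∑ q ∈ Q, M p q * M p q
  have hrows : ∑ p ∈ t, (M * Mᵀ) p p = mass t t := by
    refine Finset.sum_congr rfl fun p hp => ?_
    have hout : ∑ q ∈ tᶜ, M p q * M p q = 0 := Finset.sum_eq_zero fun q hq => by
      simp [hs p ((ht p).1 hp) q (by simpa [ht] using hq)]
    rw [Matrix.mul_apply, ← Finset.sum_add_sum_compl t]
    simp only [Matrix.transpose_apply, hout, add_zero]
  have hcols : ∑ p ∈ t, (Mᵀ * M) p p = mass t t + mass tᶜ t := by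
    simp only [Matrix.mul_apply, Matrix.transpose_apply, mass]
    rw [Finset.sum_comm (s := t) (t := t), Finset.sum_comm (s := tᶜ), ← Finset.sum_add_distrib]
    exact Finset.sum_congr rfl fun p _ => (Finset.sum_add_sum_compl t _).symm
  have hzero : mass tᶜ t = 0 := by
    have := congrArg (fun X => ∑ p ∈ t, X p p) hM
    simp only [hrows, hcols] at this
    linarith
  have hsq : ∀ p ∈ tᶜ, ∀ q ∈ t, M p q * M p q = 0 := fun p hp =>
    (Finset.sum_eq_zero_iff_of_nonneg fun q _ => mul_self_nonneg (M p q)).1 <|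
      (Finset.sum_eq_zero_iff_of_nonneg fun p _ =>
        Finset.sum_nonneg fun q _ => mul_self_nonneg (M p q)).1 hzero p hp
  exact mul_self_eq_zero.1 (hsq m (by simpa [ht] using hm) k ((ht k).2 hk))

section StructureConstants

variable {ι K A : Type*} [Fintype ι] [CommRing K] [CommRing A] [Algebra K A]
  {b : Module.Basis ι K A} {N : ι → ι → ι → ℤ}

theorem repr_basis_mul (hmul : ∀ i j, b i * b j = ∑ m, (N i j m : K) • b m) (i j m : ι) :
    b.repr (b i * b j) m = N i j m := by
  rw [hmul, b.repr_sum_self]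

theorem repr_basis_mul_apply (hmul : ∀ i j, b i * b j = ∑ m, (N i j m : K) • b m)
    (i : ι) (x : A) (k : ι) : b.repr (b i * x) k = ∑ p, b.repr x p * N i p k := by
  conv_lhs => rw [← b.sum_repr x]
  simp only [Finset.mul_sum, mul_smul_comm, map_sum, map_smul, Finsupp.coe_finsetSum,
    Finset.sum_apply, Finsupp.smul_apply, repr_basis_mul hmul, smul_eq_mul]

theorem structConst_comm [CharZero K] (hmul : ∀ i j, b i * b j = ∑ m, (N i j m : K) • b m)
    (i j m : ι) : N i j m = N j i m := by
  have h : (N i j m : K) = N j i m := by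
    rw [← repr_basis_mul hmul, ← repr_basis_mul hmul, mul_comm]
  exact_mod_cast h

theorem structConst_frobenius [CharZero K] [DecidableEq ι] {σ : ι → ι}
    (hmul : ∀ i j, b i * b j = ∑ m, (N i j m : K) • b m) (hσ : ∀ i, σ (σ i) = i)
    (hσN : ∀ i j m, N (σ i) (σ j) m = N i j (σ m)) (τ : A →ₗ[K] K)
    (hτ : ∀ i j, τ (b (σ i) * b j) = if i = j then 1 else 0) (c a d : ι) :
    N (σ c) a d = N c d a := by
  have hτ_mul : ∀ i x, τ (b (σ i) * x) = b.repr x i := by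
    intro i x
    change (τ ∘ₗ LinearMap.mulLeft K (b (σ i))) x = b.coord i x
    congr 1
    refine b.ext fun j => ?_
    simp [hτ, Finsupp.single_apply, eq_comm]
  have h : (N (σ c) a d : K) = N c d a := calc
    (N (σ c) a d : K) = τ (b (σ d) * (b (σ c) * b a)) := by rw [hτ_mul, repr_basis_mul hmul]
    _ = τ (b (σ (σ a)) * (b (σ c) * b (σ d))) := by rw [hσ]; ring_nf
    _ = N c d a := by rw [hτ_mul, repr_basis_mul hmul, hσN, hσ]
  exact_mod_cast h

theorem structConst_mul_transpose_comm [CharZero K] {σ : ι → ι}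
    (hmul : ∀ i j, b i * b j = ∑ m, (N i j m : K) • b m)
    (hfrob : ∀ c a d, N (σ c) a d = N c d a) (i : ι) :
    (of fun m k => N i m k) * (of fun m k => N i m k)ᵀ =
      (of fun m k => N i m k)ᵀ * (of fun m k => N i m k) := by
  ext l k
  have h := congrArg (fun x => b.repr x k) (mul_left_comm (b (σ i)) (b i) (b l))
  rw [repr_basis_mul_apply hmul, repr_basis_mul_apply hmul] at h
  simp only [repr_basis_mul hmul, hfrob] at h
  simp only [mul_apply, transpose_apply, of_apply]
  exact_mod_cast h

theorem structConst_eq_zero_of_closed [CharZero K]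
    (hmul : ∀ i j, b i * b j = ∑ m, (N i j m : K) • b m)
    {B' : Set ι} (hclosed : ∀ x ∈ Submodule.span ℤ (b '' B'), ∀ y ∈ Submodule.span ℤ (b '' B'),
      x * y ∈ Submodule.span ℤ (b '' B')) {i j m : ι} (hi : i ∈ B') (hj : j ∈ B') (hm : m ∉ B') :
    N i j m = 0 := by
  have hij := Submodule.span_le_restrictScalars ℤ K _ <|
    hclosed _ (Submodule.subset_span ⟨i, hi, rfl⟩) _ (Submodule.subset_span ⟨j, hj, rfl⟩)
  have h : (N i j m : K) = 0 := by
    rw [← repr_basis_mul hmul, ← Finsupp.notMem_support_iff]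
    exact fun hsupp => hm (b.mem_span_image.1 hij hsupp)
  exact_mod_cast h

end StructureConstants

theorem zBasedRng_closed_subset_involution_invariant_general
    {n : ℕ} (A : Type*) [CommRing A] [Algebra ℂ A]
    (b : Module.Basis (Fin n) ℂ A) (N : Fin n → Fin n → Fin n → ℤ) (σ : Fin n → Fin n)
    (hmul : ∀ i j, b i * b j = ∑ m, (N i j m : ℂ) • b m)
    (hσ : ∀ i, σ (σ i) = i)
    (hσN : ∀ i j m, N (σ i) (σ j) m = N i j (σ m))
    (hτ : ∀ i j, (∑ m, (starRingEnd ℂ) (b.repr 1 m) * (N (σ i) j m : ℂ)) =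
      if i = j then (1 : ℂ) else 0)
    (B' : Set (Fin n))
    (hclosed : ∀ x ∈ Submodule.span ℤ (⇑b '' B'), ∀ y ∈ Submodule.span ℤ (⇑b '' B'),
      x * y ∈ Submodule.span ℤ (⇑b '' B')) :
    ∀ i ∈ B', σ i ∈ B' := by
  let τ : A →ₗ[ℂ] ℂ := ∑ m, starRingEnd ℂ (b.repr 1 m) • b.coord m
  have hfrob : ∀ c a d, N (σ c) a d = N c d a := by
    refine structConst_frobenius hmul hσ hσN τ fun i j => ?_
    simp [τ, ← hτ, repr_basis_mul hmul]
  intro i hi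
  by_contra hσi
  have hblock : ∀ m ∉ B', ∀ k ∈ B', N i m k = 0 := fun m hm k hk =>
    Matrix.apply_eq_zero_of_mul_transpose_comm_of_block _
      (structConst_mul_transpose_comm hmul hfrob i) B'
      (fun _ hp _ hq => structConst_eq_zero_of_closed hmul hclosed hi hp hq) hm hk
  have hzero : ∀ k, N (σ i) i k = 0 := by
    intro k
    by_cases hk : k ∈ B'
    · rw [structConst_comm hmul]; exact hblock _ hσi _ hk
    · rw [hfrob]; exact hblock _ hk _ hi
  simpa [hzero] using hτ i i

/-- Let `(R,B)` be a `ℤ`-based rng and `B' ⊆ B` a closed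
subset (its `ℤ`-span is closed under multiplication).  Then `B'` is invariant
under the involution: `~b ∈ B'` for every `b ∈ B'` (hence the `ℤ`-span of `B'`
is `~`-invariant). -/
theorem zBasedRng_closed_subset_involution_invariant
    {n : ℕ} (A : Type*) [CommRing A] [Algebra ℂ A]
    (b : Module.Basis (Fin n) ℂ A) (N : Fin n → Fin n → Fin n → ℤ) (σ : Fin n → Fin n)
    (hmul : ∀ i j, b i * b j = ∑ m, (N i j m : ℂ) • b m)
    (hσ : ∀ i, σ (σ i) = i)
    (hσN : ∀ i j m, N (σ i) (σ j) m = N i j (σ m))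
    (hτ : ∀ i j, (∑ m, (starRingEnd ℂ) (b.repr 1 m) * (N (σ i) j m : ℂ)) =
      if i = j then (1 : ℂ) else 0)
    (he : ∀ j, (starRingEnd ℂ) (b.repr 1 (σ j)) = b.repr 1 j)
    (B' : Set (Fin n))
    (hclosed : ∀ x ∈ Submodule.span ℤ (⇑b '' B'), ∀ y ∈ Submodule.span ℤ (⇑b '' B'),
      x * y ∈ Submodule.span ℤ (⇑b '' B')) :
    ∀ i ∈ B', σ i ∈ B' :=
  zBasedRng_closed_subset_involution_invariant_general A b N σ hmul hσ hσN hτ B' hclosed
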